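/- arXiv:1408.2770 — 4 statements merged into one kernel-verified Lean document; each statement's English description precedes it below -/
import Mathlib

section
/- Let n ≥ 2, let A = [[a,b],[c,d]] satisfy c > a > d > 0 > b, and let x ∈ [0,1]ⁿ be a strategy vector on the complete graph Kₙ, with payoffs P_i = Σ_{j≠i} u(x_i, x_j). Then payoffs are ordered inversely to strategies: for all players i, j, if x_i < x_j then P_i > P_j, and if x_i ≤ x_j then P_i ≥ P_j. -/
/-- The pairwise payoff of a two-strategy game with payoff matrix
`A = [[a,b],[c,d]]`: `u x y = [x, 1-x]ᵀ A [y, 1-y]`. -/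
def pdPayoff (a b c d x y : ℝ) : ℝ :=
  a * x * y + b * x * (1 - y) + c * (1 - x) * y + d * (1 - x) * (1 - y)

/-- The total payoff to player `i` on the complete graph `Kₙ`:
`P_i = Σ_{j ≠ i} u(x_i, x_j)`. -/
noncomputable def completePayoff (n : ℕ) (a b c d : ℝ) (x : Fin n → ℝ) (i : Fin n) : ℝ :=
  ∑ j ∈ Finset.univ.erase i, pdPayoff a b c d (x i) (x j)

lemma completePayoff_diff (n : ℕ) (a b c d : ℝ) (x : Fin n → ℝ) (i j : Fin n)
    (hij : i ≠ j) :
    completePayoff n a b c d x i - completePayoff n a b c d x j =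
      (x i - x j) * ((b - c) +
        ∑ k ∈ (Finset.univ.erase i).erase j,
          ((b - d) + (a - b - c + d) * x k)) := by
  unfold completePayoff
  have hji : j ∈ Finset.univ.erase i := Finset.mem_erase.mpr ⟨hij.symm, Finset.mem_univ j⟩
  have hijm : i ∈ Finset.univ.erase j := Finset.mem_erase.mpr ⟨hij, Finset.mem_univ i⟩
  rw [← Finset.add_sum_erase _ _ hji, ← Finset.add_sum_erase _ _ hijm,
    Finset.erase_right_comm (a := j) (b := i)]
  have h1 : pdPayoff a b c d (x i) (x j) - pdPayoff a b c d (x j) (x i)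
      = (x i - x j) * (b - c) := by unfold pdPayoff; ring
  have h2 : ∑ k ∈ (Finset.univ.erase i).erase j,
        (x i - x j) * ((b - d) + (a - b - c + d) * x k)
      = ∑ k ∈ (Finset.univ.erase i).erase j,
        (pdPayoff a b c d (x i) (x k) - pdPayoff a b c d (x j) (x k)) :=
    Finset.sum_congr rfl (fun k _ => by unfold pdPayoff; ring)
  rw [mul_add, Finset.mul_sum, h2, Finset.sum_sub_distrib, ← h1]
  ring

/-- On the complete graph with a prisoner's dilemma payoff matrix
(`c > a > d > 0 > b`) and strategies in `[0,1]`, payoffs are ordered inversely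
to strategies: if `x_i < x_j` then `P_i > P_j`, and if `x_i ≤ x_j` then
`P_i ≥ P_j`. -/
theorem completePayoff_inversely_ordered
    (n : ℕ) (hn : 2 ≤ n)
    (a b c d : ℝ) (hca : c > a) (had : a > d) (hd : d > 0) (hb : (0 : ℝ) > b)
    (x : Fin n → ℝ) (hx : ∀ i, x i ∈ Set.Icc (0 : ℝ) 1) :
    ∀ i j : Fin n,
      (x i < x j → completePayoff n a b c d x i > completePayoff n a b c d x j) ∧
      (x i ≤ x j → completePayoff n a b c d x i ≥ completePayoff n a b c d x j) := by
  intro i j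
  have hT : ∀ i j : Fin n,
      (b - c) + ∑ k ∈ (Finset.univ.erase i).erase j,
        ((b - d) + (a - b - c + d) * x k) < 0 := by
    intro i j
    have hs : ∑ k ∈ (Finset.univ.erase i).erase j,
        ((b - d) + (a - b - c + d) * x k) ≤ 0 :=
      Finset.sum_nonpos fun k _ => by
        obtain ⟨h0, h1⟩ := hx k
        nlinarith
    linarith
  constructor
  · intro hlt
    have hij : i ≠ j := fun h => absurd hlt (by rw [h]; exact lt_irrefl _)
    have hdiff := completePayoff_diff n a b c d x i j hij
    have := mul_pos_of_neg_of_neg (by linarith : x i - x j < 0) (hT i j)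
    linarith [hdiff]
  · intro hle
    by_cases h : i = j
    · subst h; exact le_refl _
    · have hdiff := completePayoff_diff n a b c d x i j h
      nlinarith [hT i j, hdiff]
end

section
/- Let n ≥ 2, let A = [[a,b],[c,d]] satisfy c > a > d > 0 > b, and let x ∈ [0,1]ⁿ with payoffs P_i = Σ_{j≠i} u(x_i, x_j) on the complete graph. If player i is not of minimal strategy, i.e. there exists j with x_j < x_i, then the denominator in the complete-graph imitation update is strictly positive: Σ_{j : x_j < x_i} (P_j − P_i) > 0. -/
/-- If player `i` is not of minimal strategy (there is `j` with `x_j < x_i`),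
then the denominator of the complete-graph imitation update is strictly
positive: `Σ_{j : x_j < x_i} (P_j − P_i) > 0`. -/
theorem imitation_denominator_pos
    (n : ℕ) (hn : 2 ≤ n)
    (a b c d : ℝ) (hca : c > a) (had : a > d) (hd : d > 0) (hb : (0 : ℝ) > b)
    (x : Fin n → ℝ) (hx : ∀ i, x i ∈ Set.Icc (0 : ℝ) 1)
    (i : Fin n) (hi : ∃ j, x j < x i) :
    0 < ∑ j ∈ Finset.univ.filter (fun j => x j < x i),
        (completePayoff n a b c d x j - completePayoff n a b c d x i) := by
  obtain ⟨j0, hj0⟩ := hi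
  apply Finset.sum_pos _ ⟨j0, by simp [hj0]⟩
  intro j hj
  simp only [Finset.mem_filter] at hj
  have hxj : x j < x i := hj.2
  have hij : j ≠ i := fun h => lt_irrefl _ (h ▸ hxj)
  -- against any opponent strategy y in [0,1], the lower strategy earns strictly more
  have key : ∀ k : Fin n, pdPayoff a b c d (x i) (x k) < pdPayoff a b c d (x j) (x k) := by
    intro k
    obtain ⟨hy0, hy1⟩ := hx k
    unfold pdPayoff
    have ht : 0 < x i - x j := sub_pos.mpr hxj
    rcases le_or_gt (c - a) (d - b) with h | h
    · nlinarith [mul_nonneg (sub_nonneg.mpr h) (mul_nonneg ht.le (sub_nonneg.mpr hy1)),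
        mul_pos (sub_pos.mpr hca) ht,
        mul_nonneg ht.le hy0, mul_nonneg ht.le (sub_nonneg.mpr hy1)]
    · nlinarith [mul_nonneg (sub_nonneg.mpr h.le) (mul_nonneg ht.le hy0),
        mul_pos (show (0:ℝ) < d - b by linarith) ht,
        mul_nonneg ht.le hy0, mul_nonneg ht.le (sub_nonneg.mpr hy1)]
  -- cross term
  obtain ⟨hi0, hi1⟩ := hx i
  obtain ⟨hj0', hj1⟩ := hx j
  have cross : pdPayoff a b c d (x i) (x j) < pdPayoff a b c d (x j) (x i) := by
    unfold pdPayoff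
    nlinarith [mul_pos (show (0:ℝ) < c - b by linarith) (sub_pos.mpr hxj)]
  have hiu : i ∈ Finset.univ.erase j := Finset.mem_erase.mpr ⟨hij.symm, Finset.mem_univ i⟩
  have hju : j ∈ Finset.univ.erase i := Finset.mem_erase.mpr ⟨hij, Finset.mem_univ j⟩
  set S := (Finset.univ.erase j).erase i with hS
  have e1 : Finset.univ.erase j = insert i S := (Finset.insert_erase hiu).symm
  have e2 : Finset.univ.erase i = insert j S := by
    rw [hS, Finset.erase_right_comm]
    exact (Finset.insert_erase (Finset.mem_erase.mpr ⟨hij, Finset.mem_univ j⟩)).symm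
  have hiS : i ∉ S := Finset.notMem_erase i _
  have hjS : j ∉ S := by
    rw [hS, Finset.erase_right_comm]; exact Finset.notMem_erase j _
  rw [sub_pos]
  unfold completePayoff
  rw [e1, e2, Finset.sum_insert hiS, Finset.sum_insert hjS]
  exact add_lt_add_of_lt_of_le cross (Finset.sum_le_sum fun k _ => (key k).le)
end

section
/- Let n ≥ 2, let A = [[a,b],[c,d]] satisfy c > a > d > 0 > b, let ε ∈ (0,1), and let x ∈ [0,1]ⁿ with payoffs P_i = Σ_{j≠i} u(x_i, x_j) on the complete graph. Under one step of the complete-graph imitation update, every player whose strategy is not minimal strictly decreases: if there exists j with x_j < x_i, then the updated strategy x_i′ = x_i + ε·Σ_{j∈J_i} (P_j − P_i)(x_j − x_i) / Σ_{j∈J_i} (P_j − P_i) satisfies x_i′ < x_i, where J_i = {j : x_j < x_i}. -/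
lemma pd_mono (a b c d xi xj y : ℝ) (hca : c > a) (hdb : d > b)
    (hy0 : 0 ≤ y) (hy1 : y ≤ 1) (h : xj ≤ xi) :
    pdPayoff a b c d xi y ≤ pdPayoff a b c d xj y := by
  unfold pdPayoff
  nlinarith [mul_nonneg (mul_nonneg (sub_nonneg.2 h) (sub_pos.2 hca).le) hy0,
    mul_nonneg (mul_nonneg (sub_nonneg.2 h) (sub_pos.2 hdb).le) (sub_nonneg.2 hy1)]

lemma payoff_gt (n : ℕ) (a b c d : ℝ) (hca : c > a) (had : a > d) (hd : d > 0)
    (hb : (0 : ℝ) > b) (x : Fin n → ℝ) (hx : ∀ i, x i ∈ Set.Icc (0 : ℝ) 1)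
    (i j : Fin n) (hij : x j < x i) :
    completePayoff n a b c d x i < completePayoff n a b c d x j := by
  have hne : i ≠ j := fun h => by rw [h] at hij; exact lt_irrefl _ hij
  have hji : (j : Fin n) ∈ Finset.univ.erase i := Finset.mem_erase.2 ⟨hne.symm, Finset.mem_univ _⟩
  have hijm : (i : Fin n) ∈ Finset.univ.erase j := Finset.mem_erase.2 ⟨hne, Finset.mem_univ _⟩
  unfold completePayoff
  rw [← Finset.add_sum_erase _ _ hji, ← Finset.add_sum_erase _ _ hijm,
    Finset.erase_right_comm]
  have hsum : ∑ k ∈ (Finset.univ.erase j).erase i, pdPayoff a b c d (x i) (x k) ≤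
      ∑ k ∈ (Finset.univ.erase j).erase i, pdPayoff a b c d (x j) (x k) := by
    apply Finset.sum_le_sum
    intro k _
    exact pd_mono a b c d (x i) (x j) (x k) hca (by linarith) (hx k).1 (hx k).2 hij.le
  have hhead : pdPayoff a b c d (x i) (x j) < pdPayoff a b c d (x j) (x i) := by
    unfold pdPayoff
    nlinarith [mul_pos (sub_pos.2 hij) (show (0:ℝ) < c - b by linarith)]
  linarith

/-- Under one step of the complete-graph imitation update with step size
`ε ∈ (0,1)`, every player whose strategy is not minimal strictly decreases:
if there is `j` with `x_j < x_i`, then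
`x_i′ = x_i + ε·Σ_{j∈J_i} (P_j − P_i)(x_j − x_i) / Σ_{j∈J_i} (P_j − P_i) < x_i`,
where `J_i = {j : x_j < x_i}`. -/
theorem imitation_update_strict_decrease
    (n : ℕ) (hn : 2 ≤ n)
    (a b c d : ℝ) (hca : c > a) (had : a > d) (hd : d > 0) (hb : (0 : ℝ) > b)
    (ε : ℝ) (hε : ε ∈ Set.Ioo (0 : ℝ) 1)
    (x : Fin n → ℝ) (hx : ∀ i, x i ∈ Set.Icc (0 : ℝ) 1)
    (i : Fin n) (hi : ∃ j, x j < x i) :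
    x i + ε * (∑ j ∈ Finset.univ.filter (fun j => x j < x i),
          (completePayoff n a b c d x j - completePayoff n a b c d x i) * (x j - x i)) /
        (∑ j ∈ Finset.univ.filter (fun j => x j < x i),
          (completePayoff n a b c d x j - completePayoff n a b c d x i))
      < x i := by
  obtain ⟨j0, hj0⟩ := hi
  have hne : (Finset.univ.filter (fun j => x j < x i)).Nonempty :=
    ⟨j0, Finset.mem_filter.2 ⟨Finset.mem_univ _, hj0⟩⟩
  have hden : 0 < ∑ j ∈ Finset.univ.filter (fun j => x j < x i),
      (completePayoff n a b c d x j - completePayoff n a b c d x i) := by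
    apply Finset.sum_pos _ hne
    intro j hj
    have := payoff_gt n a b c d hca had hd hb x hx i j (Finset.mem_filter.1 hj).2
    linarith
  have hnum : (∑ j ∈ Finset.univ.filter (fun j => x j < x i),
      (completePayoff n a b c d x j - completePayoff n a b c d x i) * (x j - x i)) < 0 := by
    apply Finset.sum_neg _ hne
    intro j hj
    have h1 := payoff_gt n a b c d hca had hd hb x hx i j (Finset.mem_filter.1 hj).2
    have h2 := (Finset.mem_filter.1 hj).2
    exact mul_neg_of_pos_of_neg (by linarith) (by linarith)
  have : ε * _ / _ < 0 := div_neg_of_neg_of_pos (mul_neg_of_pos_of_neg hε.1 hnum) hden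
  linarith
end

section
/- Let n ≥ 2, let A = [[a,b],[c,d]] satisfy c > a > d > 0 > b, let ε ∈ (0,1), and let x ∈ [0,1]ⁿ with payoffs P_i = Σ_{j≠i} u(x_i, x_j) on the complete graph. Then a player holding the minimal strategy is unchanged by the complete-graph imitation update: if x_l = min_j x_j, then x_l′ = x_l. Consequently the minimum of the strategy vector is invariant: min_i x_i′ = min_i x_i, where x′ denotes the updated strategy vector. -/
/-- One step of the complete-graph imitation update with step size `ε`:
`x_i ↦ x_i + ε·Σ_{j∈J_i} (P_j − P_i)(x_j − x_i) / Σ_{j∈J_i} (P_j − P_i)` where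
`J_i = {j : x_j < x_i}`; `x_i` is unchanged when `J_i` is empty. -/
noncomputable def imitationUpdate (n : ℕ) (a b c d ε : ℝ) (x : Fin n → ℝ) (i : Fin n) : ℝ :=
  if (Finset.univ.filter (fun j => x j < x i)).Nonempty then
    x i + ε * (∑ j ∈ Finset.univ.filter (fun j => x j < x i),
          (completePayoff n a b c d x j - completePayoff n a b c d x i) * (x j - x i)) /
        (∑ j ∈ Finset.univ.filter (fun j => x j < x i),
          (completePayoff n a b c d x j - completePayoff n a b c d x i))
  else x i

/-- A player holding the minimal strategy is unchanged by the complete-graph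
imitation update, and consequently the minimum of the strategy vector is
invariant under the update. -/
theorem imitation_update_min_invariant
    (n : ℕ) (hn : 2 ≤ n)
    (a b c d : ℝ) (hca : c > a) (had : a > d) (hd : d > 0) (hb : (0 : ℝ) > b)
    (ε : ℝ) (hε : ε ∈ Set.Ioo (0 : ℝ) 1)
    (x : Fin n → ℝ) (hx : ∀ i, x i ∈ Set.Icc (0 : ℝ) 1) :
    (∀ l : Fin n, (∀ j, x l ≤ x j) → imitationUpdate n a b c d ε x l = x l) ∧
    Finset.univ.inf' (Finset.univ_nonempty_iff.mpr ⟨⟨0, by omega⟩⟩)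
        (imitationUpdate n a b c d ε x)
      = Finset.univ.inf' (Finset.univ_nonempty_iff.mpr ⟨⟨0, by omega⟩⟩) x := by
  obtain ⟨hε0, hε1⟩ := hε
  -- u is strictly decreasing in its first argument
  have hu1 : ∀ y z w : ℝ, y ∈ Set.Icc (0:ℝ) 1 → z < w →
      pdPayoff a b c d w y < pdPayoff a b c d z y := by
    intro y z w hy hzw
    have hcoef : 0 < y * (c - a) + (1 - y) * (d - b) := by
      rcases lt_or_ge 0 y with h | h
      · have h1 := mul_pos h (show (0:ℝ) < c - a by linarith)
        have h2 := mul_nonneg (show (0:ℝ) ≤ 1 - y by linarith [hy.2])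
          (show (0:ℝ) ≤ d - b by linarith)
        linarith
      · have hy0 : y = 0 := le_antisymm h hy.1
        rw [hy0]; ring_nf; linarith
    have := mul_pos (sub_pos.mpr hzw) hcoef
    simp only [pdPayoff]
    nlinarith [this]
  -- u is strictly increasing in its second argument
  have hu2 : ∀ xv y z : ℝ, xv ∈ Set.Icc (0:ℝ) 1 → y < z →
      pdPayoff a b c d xv y < pdPayoff a b c d xv z := by
    intro xv y z hxv hyz
    have hcoef : 0 < xv * (a - b) + (1 - xv) * (c - d) := by
      rcases lt_or_ge 0 xv with h | h
      · have h1 := mul_pos h (show (0:ℝ) < a - b by linarith)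
        have h2 := mul_nonneg (show (0:ℝ) ≤ 1 - xv by linarith [hxv.2])
          (show (0:ℝ) ≤ c - d by linarith)
        linarith
      · have hx0 : xv = 0 := le_antisymm h hxv.1
        rw [hx0]; ring_nf; linarith
    have := mul_pos (sub_pos.mpr hyz) hcoef
    simp only [pdPayoff]
    nlinarith [this]
  -- lower strategy gets strictly higher total payoff
  have hP : ∀ i j : Fin n, x j < x i →
      completePayoff n a b c d x i < completePayoff n a b c d x j := by
    intro i j hij
    have hne : i ≠ j := by intro h; rw [h] at hij; exact lt_irrefl _ hij
    have hi : i ∈ Finset.univ.erase j := Finset.mem_erase.mpr ⟨hne, Finset.mem_univ i⟩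
    have hj : j ∈ Finset.univ.erase i := Finset.mem_erase.mpr ⟨hne.symm, Finset.mem_univ j⟩
    set S := ((Finset.univ : Finset (Fin n)).erase i).erase j with hS
    have e1 : (Finset.univ : Finset (Fin n)).erase i = insert j S := (Finset.insert_erase hj).symm
    have e2 : (Finset.univ : Finset (Fin n)).erase j = insert i S := by
      rw [hS, Finset.erase_right_comm]
      exact (Finset.insert_erase hi).symm
    have hjS : j ∉ S := Finset.notMem_erase _ _
    have hiS : i ∉ S := by
      rw [hS, Finset.erase_right_comm]; exact Finset.notMem_erase _ _
    unfold completePayoff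
    rw [e1, e2, Finset.sum_insert hjS, Finset.sum_insert hiS]
    have hcross : pdPayoff a b c d (x i) (x j) < pdPayoff a b c d (x j) (x i) :=
      lt_trans (hu1 (x j) (x j) (x i) (hx j) hij) (hu2 (x j) (x j) (x i) (hx j) hij)
    have hsum : ∑ k ∈ S, pdPayoff a b c d (x i) (x k)
        ≤ ∑ k ∈ S, pdPayoff a b c d (x j) (x k) :=
      Finset.sum_le_sum fun k _ => (hu1 (x k) (x j) (x i) (hx k) hij).le
    exact add_lt_add_of_lt_of_le hcross hsum
  have hmin : ∀ l : Fin n, (∀ j, x l ≤ x j) → imitationUpdate n a b c d ε x l = x l := by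
    intro l hl
    unfold imitationUpdate
    rw [if_neg]
    rintro ⟨j, hj⟩
    exact absurd (hl j) (not_le.mpr (Finset.mem_filter.mp hj).2)
  refine ⟨hmin, ?_⟩
  set m := Finset.univ.inf' (Finset.univ_nonempty_iff.mpr ⟨⟨0, by omega⟩⟩) x with hm
  apply le_antisymm
  · obtain ⟨l, -, hl⟩ := Finset.exists_mem_eq_inf'
      (Finset.univ_nonempty_iff.mpr ⟨(⟨0, by omega⟩ : Fin n)⟩) x
    have hlmin : ∀ j, x l ≤ x j := fun j => hl ▸ Finset.inf'_le x (Finset.mem_univ j)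
    calc Finset.univ.inf' (Finset.univ_nonempty_iff.mpr ⟨⟨0, by omega⟩⟩)
          (imitationUpdate n a b c d ε x)
        ≤ imitationUpdate n a b c d ε x l :=
          Finset.inf'_le _ (Finset.mem_univ l)
      _ = x l := hmin l hlmin
      _ = m := hl.symm
  · apply Finset.le_inf'
    intro i _
    have hmi : m ≤ x i := Finset.inf'_le x (Finset.mem_univ i)
    unfold imitationUpdate
    split_ifs with hJ
    · set J := (Finset.univ : Finset (Fin n)).filter (fun j => x j < x i) with hJdef
      have hwpos : ∀ j ∈ J, 0 < completePayoff n a b c d x j - completePayoff n a b c d x i := by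
        intro j hjJ
        have h := hP i j (Finset.mem_filter.mp hjJ).2
        linarith
      have hS2 : 0 < ∑ j ∈ J, (completePayoff n a b c d x j - completePayoff n a b c d x i) :=
        Finset.sum_pos hwpos hJ
      have hkey : (m - x i) *
            (∑ j ∈ J, (completePayoff n a b c d x j - completePayoff n a b c d x i))
          ≤ ∑ j ∈ J, (completePayoff n a b c d x j - completePayoff n a b c d x i)
              * (x j - x i) := by
        rw [Finset.mul_sum]
        apply Finset.sum_le_sum
        intro j hj
        have hmj : m ≤ x j := Finset.inf'_le x (Finset.mem_univ j)
        nlinarith [mul_le_mul_of_nonneg_left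
          (show m - x i ≤ x j - x i by linarith) (hwpos j hj).le]
      have h1 : m - x i ≤
          (∑ j ∈ J, (completePayoff n a b c d x j - completePayoff n a b c d x i)
              * (x j - x i)) /
          (∑ j ∈ J, (completePayoff n a b c d x j - completePayoff n a b c d x i)) :=
        (le_div_iff₀ hS2).mpr hkey
      rw [mul_div_assoc]
      nlinarith [mul_le_mul_of_nonneg_left h1 hε0.le]
    · exact hmi
end
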